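/- arXiv:1605.08416 — 3 statements merged into one kernel-verified Lean document; each statement's English description precedes it below -/
import Mathlib

section
/- Any tri-colored sum-free set in F_2^n has size at most 3 · Σ_{k=0}^{⌊n/3⌋} C(n,k). -/
/-!
Tao's slice-rank argument. Over `𝔽₂`, `[x + y + z = 0] = ∏ₜ (1 + xₜ + yₜ + zₜ)`, and expanding the
product gives monomials `x^S₁ y^S₂ z^S₃` with `S₁, S₂, S₃` disjoint, so one of the three sets has
at most `n / 3` elements. Grouping the monomials by such a small set writes the tensor
`(i, j, k) ↦ [a i + b j + c k = 0]`, which is the identity tensor, as a sum of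
`3 · #{S | #S ≤ n / 3}` slices. The identity tensor needs `m` slices: the vectors killing the
first family form a space of dimension at least `m - #s₁`, which contains a vector `v` with at
least that many nonzero entries; contracting with `v` gives `diagonal v`, whose rank is bounded
by the number of the remaining slices.
-/

open Finset Module

namespace Matrix

variable {m n K : Type*} [Fintype n] [Field K]

theorem rank_add_le (A B : Matrix m n K) : (A + B).rank ≤ A.rank + B.rank := by
  rw [rank, rank, rank, mulVecLin_add]
  exact (Submodule.finrank_mono (LinearMap.range_add_le _ _)).trans
    (Submodule.finrank_add_le_finrank_add_finrank _ _)

theorem rank_sum_le {α : Type*} (s : Finset α) (A : α → Matrix m n K) :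
    (∑ a ∈ s, A a).rank ≤ ∑ a ∈ s, (A a).rank := by
  classical
  induction s using Finset.induction_on with
  | empty => simp
  | insert a s ha ih =>
    rw [sum_insert ha, sum_insert ha]
    exact (rank_add_le _ _).trans (by gcongr)

theorem rank_sum_vecMulVec_le {α : Type*} (s : Finset α) (u : α → m → K) (w : α → n → K) :
    (∑ a ∈ s, vecMulVec (u a) (w a)).rank ≤ #s :=
  (rank_sum_le _ _).trans <| (sum_le_sum fun _ _ ↦ rank_vecMulVec_le _ _).trans_eq <| by simp

end Matrix

section SliceRank

variable {ι K : Type*} [Fintype ι] [Field K] [DecidableEq K]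

theorem Submodule.exists_hammingNorm_lt_of_hammingNorm_lt_finrank {W : Submodule K (ι → K)}
    {v : ι → K} (hv : v ∈ W) (hlt : hammingNorm v < finrank K W) :
    ∃ w ∈ W, hammingNorm v < hammingNorm w := by
  set S : Finset ι := {i | v i ≠ 0}
  let restrict : W →ₗ[K] (S → K) := (LinearMap.funLeft K K Subtype.val).comp W.subtype
  have hker : LinearMap.ker restrict ≠ ⊥ := LinearMap.ker_ne_bot_of_finrank_lt <| by
    rw [finrank_fintype_fun_eq_card, Fintype.card_coe]
    exact hlt
  obtain ⟨⟨w, hwW⟩, hw_ker, hw0⟩ := (Submodule.ne_bot_iff _).mp hker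
  have hw_S : ∀ i ∈ S, w i = 0 := fun i hi ↦ congr_fun hw_ker ⟨i, hi⟩
  obtain ⟨t, ht⟩ : ∃ t, w t ≠ 0 := by
    by_contra! h
    exact hw0 (Subtype.ext (funext h))
  have hvt : v t = 0 := by
    by_contra h
    exact ht (hw_S t (by simpa [S] using h))
  refine ⟨v + w, W.add_mem hv hwW, card_lt_card ?_⟩
  rw [ssubset_iff_of_subset]
  · exact ⟨t, by simp [hvt, ht], by simp [hvt]⟩
  · intro i hi
    simp only [mem_filter, mem_univ, true_and, Pi.add_apply] at hi ⊢
    rwa [hw_S i (by simpa [S] using hi), add_zero]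

theorem Submodule.exists_finrank_le_hammingNorm (W : Submodule K (ι → K)) :
    ∃ v ∈ W, finrank K W ≤ hammingNorm v := by
  by_contra! h
  have hgrow : ∀ k, ∃ v ∈ W, k ≤ hammingNorm v := by
    intro k
    induction k with
    | zero => exact ⟨0, W.zero_mem, Nat.zero_le _⟩
    | succ k ih =>
      obtain ⟨v, hv, hkv⟩ := ih
      obtain ⟨w, hw, hvw⟩ := exists_hammingNorm_lt_of_hammingNorm_lt_finrank hv (h v hv)
      exact ⟨w, hw, by omega⟩
  obtain ⟨v, -, hv⟩ := hgrow (Fintype.card ι + 1)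
  exact hv.not_gt (Nat.lt_succ_of_le hammingNorm_le_card_fintype)

theorem card_le_of_indicator_eq_sum_slices [DecidableEq ι] {α β γ : Type*} {s₁ : Finset α}
    {s₂ : Finset β} {s₃ : Finset γ} {f₁ : α → ι → K} {f₂ : β → ι → K} {f₃ : γ → ι → K}
    {g₁ : α → ι → ι → K} {g₂ : β → ι → ι → K} {g₃ : γ → ι → ι → K}
    (h : ∀ i j k, (if i = j ∧ j = k then 1 else 0) =
      ∑ a ∈ s₁, f₁ a i * g₁ a j k + ∑ b ∈ s₂, f₂ b j * g₂ b i k + ∑ c ∈ s₃, f₃ c k * g₃ c i j) :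
    Fintype.card ι ≤ #s₁ + #s₂ + #s₃ := by
  let Φ : (ι → K) →ₗ[K] (s₁ → K) := Matrix.mulVecLin (Matrix.of fun a i ↦ f₁ a i)
  have hker : Fintype.card ι ≤ finrank K (LinearMap.ker Φ) + #s₁ := by
    have := Φ.finrank_range_add_finrank_ker
    have := (LinearMap.range Φ).finrank_le
    simp only [finrank_fintype_fun_eq_card, Fintype.card_coe] at *
    omega
  obtain ⟨v, hvΦ, hv⟩ := (LinearMap.ker Φ).exists_finrank_le_hammingNorm
  have hv₁ : ∀ a ∈ s₁, ∑ i, v i * f₁ a i = 0 := fun a ha ↦ by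
    simpa [Φ, Matrix.mulVec, dotProduct, mul_comm] using congr_fun hvΦ ⟨a, ha⟩
  have hdiag : Matrix.diagonal v =
      ∑ b ∈ s₂, Matrix.vecMulVec (f₂ b) (fun k ↦ ∑ i, v i * g₂ b i k)
        + ∑ c ∈ s₃, Matrix.vecMulVec (fun j ↦ ∑ i, v i * g₃ c i j) (f₃ c) := by
    ext j k
    have h₁ : ∑ i, v i * ∑ a ∈ s₁, f₁ a i * g₁ a j k = 0 := by
      simp_rw [mul_sum, ← mul_assoc]
      rw [sum_comm]
      exact sum_eq_zero fun a ha ↦ by rw [← sum_mul, hv₁ a ha, zero_mul]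
    have h₂ : ∑ i, v i * ∑ b ∈ s₂, f₂ b j * g₂ b i k =
        ∑ b ∈ s₂, f₂ b j * ∑ i, v i * g₂ b i k := by
      simp_rw [mul_sum, mul_left_comm (v _)]
      exact sum_comm
    have h₃ : ∑ i, v i * ∑ c ∈ s₃, f₃ c k * g₃ c i j =
        ∑ c ∈ s₃, (∑ i, v i * g₃ c i j) * f₃ c k := by
      simp_rw [mul_sum, sum_mul, mul_left_comm (v _), mul_comm (f₃ _ k)]
      exact sum_comm
    calc Matrix.diagonal v j k = ∑ i, v i * if i = j ∧ j = k then 1 else 0 := by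
          by_cases hjk : j = k <;> simp [hjk]
      _ = _ := by
        simp_rw [h, mul_add, sum_add_distrib, h₁, h₂, h₃, zero_add]
        simp [Matrix.sum_apply, Matrix.vecMulVec_apply]
  have hrank : (Matrix.diagonal v).rank ≤ #s₂ + #s₃ := hdiag ▸ (Matrix.rank_add_le _ _).trans
    (add_le_add (Matrix.rank_sum_vecMulVec_le _ _ _) (Matrix.rank_sum_vecMulVec_le _ _ _))
  rw [Matrix.rank_diagonal, Fintype.card_subtype] at hrank
  change hammingNorm v ≤ _ at hrank
  omega

end SliceRank

section Expansion

variable {ι R : Type*} [Fintype ι] [CommSemiring R]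

theorem Finset.sum_comp_mul_eq_sum_fiberwise {σ κ : Type*} [DecidableEq κ] {s : Finset σ}
    {t : Finset κ} {p : σ → κ} (hp : ∀ a ∈ s, p a ∈ t) (u : κ → R) (r : σ → R) :
    ∑ a ∈ s, u (p a) * r a = ∑ b ∈ t, u b * ∑ a ∈ s with p a = b, r a := by
  rw [← sum_fiberwise_of_maps_to hp]
  refine sum_congr rfl fun b _ ↦ ?_
  rw [mul_sum]
  exact sum_congr rfl fun a ha ↦ by rw [(mem_filter.1 ha).2]

theorem prod_one_add_add_add [DecidableEq ι] (x y z : ι → R) :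
    ∏ t, (1 + x t + y t + z t) = ∑ σ : ι → Fin 4,
      (∏ t ∈ {t | σ t = 1}, x t) * (∏ t ∈ {t | σ t = 2}, y t) * ∏ t ∈ {t | σ t = 3}, z t := by
  have hterm : ∀ t, 1 + x t + y t + z t = ∑ e : Fin 4, ![1, x t, y t, z t] e := fun t ↦ by
    simp [Fin.sum_univ_four]
  simp_rw [hterm, prod_univ_sum, Fintype.piFinset_univ]
  refine sum_congr rfl fun σ _ ↦ ?_
  rw [← prod_fiberwise univ σ, Fin.prod_univ_four]
  have hfiber : ∀ e : Fin 4, ∏ t ∈ {t | σ t = e}, ![1, x t, y t, z t] (σ t)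
      = ∏ t ∈ {t | σ t = e}, ![1, x t, y t, z t] e := fun e ↦
    prod_congr rfl fun t ht ↦ by rw [(mem_filter.1 ht).2]
  simp [hfiber]

theorem exists_slices_prod_one_add_add_add [DecidableEq ι] {d : ℕ}
    (hd : Fintype.card ι < 3 * (d + 1)) :
    ∃ g₁ g₂ g₃ : Finset ι → (ι → R) → (ι → R) → R, ∀ x y z : ι → R,
      ∏ t, (1 + x t + y t + z t) = ∑ S ∈ {S : Finset ι | #S ≤ d}, (∏ t ∈ S, x t) * g₁ S y z
        + ∑ S ∈ {S : Finset ι | #S ≤ d}, (∏ t ∈ S, y t) * g₂ S x z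
        + ∑ S ∈ {S : Finset ι | #S ≤ d}, (∏ t ∈ S, z t) * g₃ S x y := by
  set P : (ι → Fin 4) → Fin 4 → Finset ι := fun σ e ↦ {t | σ t = e}
  have hcard : ∀ σ, #(P σ 1) + #(P σ 2) + #(P σ 3) ≤ Fintype.card ι := fun σ ↦ by
    have := card_eq_sum_card_fiberwise (s := univ) (t := univ) (f := σ) fun _ _ ↦ mem_univ _
    rw [Fin.sum_univ_four] at this
    simp only [card_univ] at this
    simp only [P]
    omega
  set C₁ : Finset (ι → Fin 4) := {σ | #(P σ 1) ≤ d}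
  set C₂ : Finset (ι → Fin 4) := {σ | ¬ #(P σ 1) ≤ d ∧ #(P σ 2) ≤ d}
  set C₃ : Finset (ι → Fin 4) := {σ | ¬ #(P σ 1) ≤ d ∧ ¬ #(P σ 2) ≤ d}
  refine ⟨fun S y z ↦ ∑ σ ∈ C₁ with P σ 1 = S, (∏ t ∈ P σ 2, y t) * ∏ t ∈ P σ 3, z t,
    fun S x z ↦ ∑ σ ∈ C₂ with P σ 2 = S, (∏ t ∈ P σ 1, x t) * ∏ t ∈ P σ 3, z t,
    fun S x y ↦ ∑ σ ∈ C₃ with P σ 3 = S, (∏ t ∈ P σ 1, x t) * ∏ t ∈ P σ 2, y t,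
    fun x y z ↦ ?_⟩
  have hsplit : ∀ F : (ι → Fin 4) → R,
      ∑ σ, F σ = ∑ σ ∈ C₁, F σ + ∑ σ ∈ C₂, F σ + ∑ σ ∈ C₃, F σ := fun F ↦ by
    rw [add_assoc, ← sum_filter_add_sum_filter_not univ (fun σ ↦ #(P σ 1) ≤ d),
      ← sum_filter_add_sum_filter_not {σ | ¬ #(P σ 1) ≤ d} (fun σ ↦ #(P σ 2) ≤ d),
      filter_filter, filter_filter]
  have hL : ∀ {C : Finset (ι → Fin 4)} {e}, (∀ σ ∈ C, #(P σ e) ≤ d) →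
      ∀ σ ∈ C, P σ e ∈ ({S : Finset ι | #S ≤ d} : Finset _) := fun h σ hσ ↦ by
    simpa using h σ hσ
  rw [prod_one_add_add_add, hsplit]
  congr 1
  congr 1
  · rw [← sum_comp_mul_eq_sum_fiberwise (hL fun σ hσ ↦ (mem_filter.1 hσ).2)]
    exact sum_congr rfl fun σ _ ↦ mul_assoc _ _ _
  · rw [← sum_comp_mul_eq_sum_fiberwise (hL fun σ hσ ↦ (mem_filter.1 hσ).2.2)]
    exact sum_congr rfl fun σ _ ↦ by ring
  · rw [← sum_comp_mul_eq_sum_fiberwise (hL fun σ hσ ↦ by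
      have := hcard σ
      simp only [C₃, mem_filter] at hσ
      omega)]
    exact sum_congr rfl fun σ _ ↦ by ring

end Expansion

theorem Finset.card_filter_card_le_eq_sum_choose {ι : Type*} [Fintype ι] (d : ℕ) :
    #({S : Finset ι | #S ≤ d} : Finset _) = ∑ k ∈ range (d + 1), (Fintype.card ι).choose k := by
  rw [card_eq_sum_card_fiberwise (f := card) (t := range (d + 1)) fun S hS ↦ by
    simpa [Nat.lt_succ_iff] using hS]
  refine sum_congr rfl fun k hk ↦ ?_
  rw [filter_filter, ← card_univ, ← card_powersetCard, powersetCard_eq_filter, powerset_univ]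
  congr 1
  ext S
  simp only [mem_filter, mem_univ, true_and, and_iff_right_iff_imp]
  rintro rfl
  simpa [Nat.lt_succ_iff] using hk

theorem ZMod.two_ite_eq_zero_eq_prod_one_add {ι : Type*} [Fintype ι] (x : ι → ZMod 2) :
    (if x = 0 then 1 else 0) = ∏ t, (1 + x t) := by
  have hcoord : ∀ u : ZMod 2, 1 + u = if u = 0 then 1 else 0 := by decide
  simp_rw [hcoord, prod_boole, funext_iff, mem_univ, true_imp_iff, Pi.zero_apply]

/-- Any tri-colored sum-free set in `𝔽₂ⁿ` has size at most
`3 * ∑_{k=0}^{⌊n/3⌋} C(n,k)`. -/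
theorem stmt2 {n m : ℕ} (a b c : Fin m → (Fin n → ZMod 2))
    (htri : ∀ i j k, a i + b j + c k = 0 ↔ (i = j ∧ j = k)) :
    m ≤ 3 * ∑ k ∈ Finset.range (n / 3 + 1), n.choose k := by
  obtain ⟨g₁, g₂, g₃, hg⟩ :=
    exists_slices_prod_one_add_add_add (R := ZMod 2) (ι := Fin n) (d := n / 3) (by simp; omega)
  have hslices : ∀ i j k, (if i = j ∧ j = k then (1 : ZMod 2) else 0) =
      ∑ S ∈ {S : Finset (Fin n) | #S ≤ n / 3}, (∏ t ∈ S, a i t) * g₁ S (b j) (c k)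
        + ∑ S ∈ {S : Finset (Fin n) | #S ≤ n / 3}, (∏ t ∈ S, b j t) * g₂ S (a i) (c k)
        + ∑ S ∈ {S : Finset (Fin n) | #S ≤ n / 3}, (∏ t ∈ S, c k t) * g₃ S (a i) (b j) :=
    fun i j k ↦ by
      simp_rw [← htri, ← hg, ZMod.two_ite_eq_zero_eq_prod_one_add, Pi.add_apply, add_assoc]
  have := card_le_of_indicator_eq_sum_slices hslices
  rw [card_filter_card_le_eq_sum_choose, Fintype.card_fin, Fintype.card_fin] at this
  omega
end

section
/- For every n ≥ 1, Σ_{k=0}^{⌊n/3⌋} C(n,k) < 2 · C(n, ⌊n/3⌋). -/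
/-!
Up to `n / 3` the binomial coefficients at least double at each step, since
`C(n, j + 1) / C(n, j) = (n - j) / (j + 1) ≥ 2` there. A sequence that doubles is dominated
by its last term: its partial sums stay below twice that term, minus the first term `C(n, 0) = 1`.
-/

open Finset

theorem sum_range_succ_add_le_two_nsmul {M : Type*} [AddCommMonoid M] [PartialOrder M]
    [IsOrderedAddMonoid M] {f : ℕ → M} {m : ℕ} (hf : ∀ j < m, 2 • f j ≤ f (j + 1)) :
    ∑ k ∈ range (m + 1), f k + f 0 ≤ 2 • f m := by
  induction m with
  | zero => simp [two_nsmul]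
  | succ m ih =>
    calc ∑ k ∈ range (m + 2), f k + f 0
        = (∑ k ∈ range (m + 1), f k + f 0) + f (m + 1) := by rw [sum_range_succ]; abel
      _ ≤ 2 • f m + f (m + 1) := by gcongr; exact ih fun j hj ↦ hf j (by omega)
      _ ≤ 2 • f (m + 1) := by
        rw [two_nsmul (f (m + 1))]
        gcongr
        exact hf m m.lt_succ_self

theorem Nat.two_mul_choose_le_choose_succ {n j : ℕ} (h : 3 * (j + 1) ≤ n) :
    2 * n.choose j ≤ n.choose (j + 1) := by
  refine Nat.le_of_mul_le_mul_right ?_ j.succ_pos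
  calc 2 * n.choose j * (j + 1) = n.choose j * (2 * (j + 1)) := by ring
    _ ≤ n.choose j * (n - j) := Nat.mul_le_mul_left _ (by omega)
    _ = n.choose (j + 1) * (j + 1) := (Nat.choose_succ_right_eq n j).symm

theorem stmt4_general (n : ℕ) :
    ∑ k ∈ Finset.range (n / 3 + 1), n.choose k < 2 * n.choose (n / 3) := by
  have h := sum_range_succ_add_le_two_nsmul (f := n.choose) (m := n / 3)
    fun j hj ↦ by simpa using Nat.two_mul_choose_le_choose_succ (n := n) (j := j) (by omega)
  simp only [Nat.choose_zero_right, smul_eq_mul] at h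
  omega

/-- For every `n ≥ 1`, `∑_{k=0}^{⌊n/3⌋} C(n,k) < 2 * C(n, ⌊n/3⌋)`. -/
theorem stmt4 (n : ℕ) (hn : 1 ≤ n) :
    ∑ k ∈ Finset.range (n / 3 + 1), n.choose k < 2 * n.choose (n / 3) :=
  stmt4_general n
end

section
/- Let p be a prime and d = ⌊(p-1)n/3⌋. The target set of any perfectly matched sequence in F_p^n has at most 3·dim L_{n,d} elements, where L_{n,d} is the span of monomials with all exponents ≤ p-1 and total degree ≤ d. -/
/-!
Pick for every target `t` an index `r t` with `a (r t) + b (r t) = t`. Perfect matching makes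
`x = a ∘ r`, `y = b ∘ r`, `z = -id` a tricolored sum-free family: `x i + y j + z k = 0` iff
`i = j = k`. Over `𝔽_q` the diagonal tensor `[x i + y j + z k = 0]` is
`∏ₗ (1 - (x i l + y j l + z k l) ^ (q - 1))`. Expanding the product, each term is a monomial of
degree `≤ q - 1` in every coordinate and of total degree `≤ (q - 1) n`, so one of its three
factors has degree `≤ (q - 1) n / 3`. Grouping the terms by that factor writes the tensor as a
sum of `3 · dim L_{n,d}` slices, while a diagonal tensor with nonzero diagonal needs at least as
many slices as it has diagonal entries (Tao's slice rank argument).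
-/

open MvPolynomial

/-- `L n d` (over `𝔽_p`): the span of monomials with all exponents `≤ p - 1`
and total degree `≤ d`. -/
noncomputable def Lspace (p n : ℕ) [Fact p.Prime] (d : ℕ) :
    Submodule (ZMod p) (MvPolynomial (Fin n) (ZMod p)) :=
  Submodule.span (ZMod p)
    {f | ∃ α : Fin n →₀ ℕ, (∀ i, α i ≤ p - 1) ∧
      (α.sum fun _ e => e) ≤ d ∧ f = monomial α 1}

open Finset Module

theorem Submodule.exists_mem_finrank_le_card_support {F ι : Type*} [Field F] [Fintype ι]
    (W : Submodule F (ι → F)) :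
    ∃ h ∈ W, finrank F W ≤ Nat.card {i // h i ≠ 0} := by
  let e : ι → Dual F W := fun i => (LinearMap.proj i).comp W.subtype
  have hspan : span F (Set.range e) = ⊤ := by
    refine eq_top_iff.2 fun φ _ => mem_span_of_iInf_ker_le_ker fun w hw => ?_
    have : w = 0 := Subtype.ext <| funext fun i => (Submodule.mem_iInf _).1 hw i
    simp [this]
  obtain ⟨κ, a, ha, hspan', hli⟩ := exists_linearIndependent' F e
  rw [hspan] at hspan'
  obtain ⟨f, hf⟩ := Module.exists_dual_forall_apply_eq_one (hli.linearIndepOn Set.univ)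
  let w := (evalEquiv F W).symm f
  have hw : ∀ k, (w : ι → F) (a k) = 1 := fun k =>
    (apply_evalEquiv_symm_apply F W (e (a k)) f).trans (hf k trivial)
  refine ⟨w, w.2, ?_⟩
  calc finrank F W = finrank F (Dual F W) := Subspace.dual_finrank_eq.symm
    _ = Nat.card κ := finrank_eq_nat_card_basis (Basis.mk hli hspan'.ge)
    _ ≤ _ := Nat.card_le_card_of_injective (fun k => ⟨a k, by simp [hw]⟩)
          fun k k' h => ha (congrArg Subtype.val h)

open Matrix in
theorem card_le_of_diagonal_eq_sum_slices {F ι κ₁ κ₂ κ₃ : Type*} [Field F] [Fintype ι]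
    [DecidableEq ι] [Fintype κ₁] [Fintype κ₂] [Fintype κ₃]
    (f₁ : κ₁ → ι → F) (g₁ : κ₁ → ι → ι → F) (f₂ : κ₂ → ι → F) (g₂ : κ₂ → ι → ι → F)
    (f₃ : κ₃ → ι → F) (g₃ : κ₃ → ι → ι → F) (c : ι → F) (hc : ∀ i, c i ≠ 0)
    (hT : ∀ i j k, ∑ r, f₁ r i * g₁ r j k + ∑ r, f₂ r j * g₂ r i k + ∑ r, f₃ r k * g₃ r i j
      = if i = j ∧ j = k then c i else 0) :
    Fintype.card ι ≤ Fintype.card κ₁ + Fintype.card κ₂ + Fintype.card κ₃ := by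
  classical
  let φ := (of f₃).mulVecLin
  obtain ⟨h, hker, hsupp⟩ := (LinearMap.ker φ).exists_mem_finrank_le_card_support
  have h₃ : ∀ r, ∑ k, f₃ r k * h k = 0 := congrFun (LinearMap.mem_ker.1 hker)
  -- contracting the third index against `h` kills the third kind of slices
  let U : Matrix ι (κ₁ ⊕ κ₂) F := of fun i => Sum.elim (f₁ · i) fun r => ∑ k, g₂ r i k * h k
  let V : Matrix (κ₁ ⊕ κ₂) ι F := of <| Sum.elim (fun r j => ∑ k, g₁ r j k * h k) f₂
  have hUV : diagonal (fun i => c i * h i) = U * V := by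
    ext i j
    calc diagonal (fun i => c i * h i) i j = ∑ k, (if i = j ∧ j = k then c i else 0) * h k := by
          by_cases hij : i = j <;> simp [hij]
      _ = ∑ k, (∑ r, f₁ r i * g₁ r j k + ∑ r, f₂ r j * g₂ r i k + ∑ r, f₃ r k * g₃ r i j)
            * h k := by simp_rw [hT]
      _ = ∑ r, f₁ r i * ∑ k, g₁ r j k * h k + ∑ r, (∑ k, g₂ r i k * h k) * f₂ r j
            + ∑ r, g₃ r i j * ∑ k, f₃ r k * h k := by
          simp only [add_mul, sum_add_distrib, sum_mul, mul_sum]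
          rw [sum_comm (γ := κ₁), sum_comm (γ := κ₂), sum_comm (γ := κ₃)]
          congr 1; congr 1
          all_goals refine sum_congr rfl fun _ _ => sum_congr rfl fun _ _ => by ring
      _ = (U * V) i j := by simp [h₃, U, V, mul_apply, Fintype.sum_sum_type]
  have hrank : Nat.card {i // h i ≠ 0} ≤ Fintype.card κ₁ + Fintype.card κ₂ := by
    calc Nat.card {i // h i ≠ 0} = Fintype.card {i // c i * h i ≠ 0} := by
          rw [Nat.card_eq_fintype_card]
          exact Fintype.card_congr (Equiv.subtypeEquivRight fun i => by simp [hc i])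
      _ = (U * V).rank := by rw [← hUV, rank_diagonal]
      _ ≤ U.rank := rank_mul_le_left U V
      _ ≤ _ := U.rank_le_card_width.trans_eq (Fintype.card_sum)
  have hrange : finrank F (LinearMap.range φ) ≤ Fintype.card κ₃ := (of f₃).rank_le_card_height
  have hnullity := φ.finrank_range_add_finrank_ker
  rw [finrank_fintype_fun_eq_card] at hnullity
  omega

section Polynomial

variable (R : Type*) [CommRing R]

noncomputable def oneSubSumPow (N : ℕ) : MvPolynomial (Fin 3) R := 1 - (X 0 + X 1 + X 2) ^ N

variable {R}

theorem add_add_le_of_mem_support_oneSubSumPow {N : ℕ} {α : Fin 3 →₀ ℕ}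
    (hα : α ∈ (oneSubSumPow R N).support) : α 0 + α 1 + α 2 ≤ N := by
  have hhom : ((X 0 + X 1 + X 2 : MvPolynomial (Fin 3) R) ^ N).IsHomogeneous (1 * N) :=
    (((isHomogeneous_X R 0).add (isHomogeneous_X R 1)).add (isHomogeneous_X R 2)).pow N
  have := (le_totalDegree hα).trans <| (totalDegree_sub _ _).trans <|
    max_le (by simp) (one_mul N ▸ hhom.totalDegree_le)
  simpa [Finsupp.sum_fintype, Fin.sum_univ_three] using this

theorem one_sub_add_add_pow_eq_sum (N : ℕ) (u v w : R) :
    1 - (u + v + w) ^ N = ∑ α ∈ (oneSubSumPow R N).support,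
      (oneSubSumPow R N).coeff α * (u ^ α 0 * v ^ α 1 * w ^ α 2) := by
  simpa [oneSubSumPow, Fin.prod_univ_three] using eval_eq' ![u, v, w] (oneSubSumPow R N)

theorem prod_one_sub_add_add_pow_eq_sum (N : ℕ) {σ : Type*} [Fintype σ] [DecidableEq σ]
    (x y z : σ → R) :
    ∏ l, (1 - (x l + y l + z l) ^ N) =
      ∑ t ∈ Fintype.piFinset fun _ => (oneSubSumPow R N).support,
        (∏ l, (oneSubSumPow R N).coeff (t l)) *
          ((∏ l, x l ^ t l 0) * (∏ l, y l ^ t l 1) * (∏ l, z l ^ t l 2)) := by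
  simp_rw [one_sub_add_add_pow_eq_sum N, prod_univ_sum, prod_mul_distrib]

end Polynomial

theorem FiniteField.prod_one_sub_pow_card_sub_one {K σ : Type*} [Field K] [Fintype K]
    [Fintype σ] [DecidableEq K] (z : σ → K) :
    ∏ l, (1 - z l ^ (Fintype.card K - 1)) = if z = 0 then 1 else 0 := by
  split_ifs with hz
  · have : Fintype.card K - 1 ≠ 0 := by have := Fintype.one_lt_card (α := K); omega
    simp [hz, this]
  · obtain ⟨l, hl⟩ := Function.ne_iff.1 hz
    exact prod_eq_zero (mem_univ l) (by rw [pow_card_sub_one_eq_one _ hl, sub_self])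

def smallExponents (N n d : ℕ) : Finset (Fin n → ℕ) :=
  {e ∈ Fintype.piFinset fun _ => Iic N | ∑ l, e l ≤ d}

theorem exists_mem_smallExponents {N n : ℕ} (e : Fin 3 → Fin n → ℕ)
    (he : ∀ l, e 0 l + e 1 l + e 2 l ≤ N) : ∃ s, e s ∈ smallExponents N n (N * n / 3) := by
  by_contra! h
  have hbound : ∀ s l, e s l ≤ N := fun s l => by have := he l; fin_cases s <;> simp <;> omega
  have hlarge : ∀ s, N * n / 3 < ∑ l, e s l := fun s => by
    simpa [smallExponents, hbound s] using h s
  have hsum : ∑ l, (e 0 l + e 1 l + e 2 l) ≤ N * n := by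
    simpa [mul_comm] using sum_le_sum fun l (_ : l ∈ univ) => he l
  rw [sum_add_distrib, sum_add_distrib] at hsum
  have := hlarge 0; have := hlarge 1; have := hlarge 2
  omega

theorem Finset.sum_comp_mul_eq_sum_mul_sum_fiberwise {σ β R : Type*} [CommSemiring R]
    [DecidableEq β]
    {s : Finset σ} {B : Finset β} {q : σ → β} (hq : ∀ t ∈ s, q t ∈ B) (f : β → R) (g : σ → R) :
    ∑ t ∈ s, f (q t) * g t = ∑ b : B, f b * ∑ t ∈ s with q t = b, g t := by
  rw [sum_coe_sort B fun b => f b * ∑ t ∈ s with q t = b, g t, ← sum_fiberwise_of_maps_to hq]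
  refine sum_congr rfl fun b _ => ?_
  rw [mul_sum]
  exact sum_congr rfl fun t ht => by rw [(mem_filter.1 ht).2]

theorem card_le_three_mul_card_smallExponents {K ι : Type*} [Field K] [Fintype K] [Fintype ι]
    [DecidableEq ι] {n : ℕ} (x y z : ι → Fin n → K)
    (hxyz : ∀ i j k, x i + y j + z k = 0 ↔ i = j ∧ j = k) :
    Fintype.card ι ≤
      3 * #(smallExponents (Fintype.card K - 1) n ((Fintype.card K - 1) * n / 3)) := by
  classical
  set N := Fintype.card K - 1
  set B := smallExponents N n (N * n / 3)
  set P := oneSubSumPow K N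
  set S := Fintype.piFinset fun _ : Fin n => P.support
  have hcover : ∀ t ∈ S, ∃ s : Fin 3, (fun l => t l s) ∈ B := fun t ht =>
    exists_mem_smallExponents (fun s l => t l s) fun l =>
      add_add_le_of_mem_support_oneSubSumPow (Fintype.mem_piFinset.1 ht l)
  choose! color hcolor using hcover
  let mon (u : Fin n → K) (e : Fin n → ℕ) : K := ∏ l, u l ^ e l
  let C (t : Fin n → Fin 3 →₀ ℕ) : K := ∏ l, P.coeff (t l)
  have hT : ∀ i j k, ∑ t ∈ S, C t * (mon (x i) (t · 0) * mon (y j) (t · 1) * mon (z k) (t · 2))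
      = if i = j ∧ j = k then 1 else 0 := fun i j k => by
    rw [← prod_one_sub_add_add_pow_eq_sum]
    exact (FiniteField.prod_one_sub_pow_card_sub_one (x i + y j + z k)).trans
      (if_congr (hxyz i j k) rfl rfl)
  let piece (s : Fin 3) := {t ∈ S | color t = s}
  have hmaps : ∀ s, ∀ t ∈ piece s, (t · s) ∈ B := fun s t ht => by
    obtain ⟨hS, rfl⟩ := mem_filter.1 ht
    exact hcolor t hS
  have hslices := card_le_of_diagonal_eq_sum_slices
    (fun (β : B) i => mon (x i) β)
    (fun β j k => ∑ t ∈ piece 0 with (t · 0) = β, C t * mon (y j) (t · 1) * mon (z k) (t · 2))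
    (fun (β : B) j => mon (y j) β)
    (fun β i k => ∑ t ∈ piece 1 with (t · 1) = β, C t * mon (x i) (t · 0) * mon (z k) (t · 2))
    (fun (β : B) k => mon (z k) β)
    (fun β i j => ∑ t ∈ piece 2 with (t · 2) = β, C t * mon (x i) (t · 0) * mon (y j) (t · 1))
    (fun _ => 1) (fun _ => one_ne_zero) fun i j k => by
      rw [← hT, ← sum_fiberwise S color, Fin.sum_univ_three]
      refine congrArg₂ (· + ·) (congrArg₂ (· + ·) ?_ ?_) ?_ <;>
        rw [← Finset.sum_comp_mul_eq_sum_mul_sum_fiberwise (hmaps _)] <;>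
        exact sum_congr rfl fun t _ => by ring
  rw [Fintype.card_coe] at hslices
  omega

theorem Lspace_eq_restrictSupport (p n d : ℕ) [Fact p.Prime] :
    Lspace p n d =
      restrictSupport (ZMod p) {α | (∀ i, α i ≤ p - 1) ∧ (α.sum fun _ e => e) ≤ d} := by
  rw [restrictSupport_eq_span, Lspace]
  congr 1
  ext f
  simp [eq_comm, and_assoc]

theorem finrank_Lspace (p n d : ℕ) [Fact p.Prime] :
    finrank (ZMod p) (Lspace p n d) = #(smallExponents (p - 1) n d) := by
  rw [Lspace_eq_restrictSupport, Module.finrank_eq_nat_card_basis (basisRestrictSupport _ _),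
    ← Fintype.card_coe, ← Nat.card_eq_fintype_card]
  refine Nat.card_congr (Finsupp.equivFunOnFinite.subtypeEquiv fun α => ?_)
  simp [smallExponents, Finsupp.sum_fintype]

def IsPerfectlyMatched {ι G : Type*} [Add G] (a b : ι → G) : Prop :=
  ∀ i j k, a i + b i = a j + b k → j = k

theorem IsPerfectlyMatched.add_add_neg_eq_zero_iff {ι G : Type*} [AddCommGroup G] {a b : ι → G}
    (h : IsPerfectlyMatched a b) (s t u : Set.range fun i => a i + b i) :
    a (Set.rangeSplitting _ s) + b (Set.rangeSplitting _ t) + -(u : G) = 0 ↔ s = t ∧ t = u := by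
  set r := Set.rangeSplitting fun i => a i + b i
  have hr : ∀ v, a (r v) + b (r v) = v := Set.apply_rangeSplitting _
  rw [add_neg_eq_zero]
  constructor
  · intro hst
    have hrst : r s = r t := h (r u) (r s) (r t) ((hr u).trans hst.symm)
    have hsu : (s : G) = u := (hr s).symm.trans ((congrArg (a (r s) + b ·) hrst).trans hst)
    obtain rfl := Set.rangeSplitting_injective _ hrst
    exact ⟨rfl, Subtype.ext hsu⟩
  · rintro ⟨rfl, rfl⟩
    exact hr s

/-- The target set of any perfectly matched sequence in `𝔽_pⁿ` has at most
`3 * dim L_{n,d}` elements, where `d = ⌊(p-1)n/3⌋`. -/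
theorem stmt12 (p n m : ℕ) [Fact p.Prime]
    (a b : Fin m → (Fin n → ZMod p))
    (hpm : ∀ i j k, a i + b i = a j + b k → j = k) :
    (Set.range fun i => a i + b i).ncard ≤
      3 * Module.finrank (ZMod p) (Lspace p n ((p - 1) * n / 3)) := by
  classical
  have hmatched : IsPerfectlyMatched a b := hpm
  have hcard := card_le_three_mul_card_smallExponents _ _
    (fun k : Set.range (fun i => a i + b i) => -(k : Fin n → ZMod p))
    hmatched.add_add_neg_eq_zero_iff
  rw [ZMod.card] at hcard
  rwa [← Nat.card_coe_set_eq, Nat.card_eq_fintype_card, finrank_Lspace]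
end
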